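/- Let A : Fin J → Fin I → ℝ and V : Fin I → Fin P → ℝ be matrices and let O = A · V, i.e. O_{j p} = Σ_i A_{j i} · V_{i p}. Assume O_{j p} ≠ 0 for all j, p, and let R : Fin J → Fin P → ℝ be output relevances. Define R^A_{j i} = Σ_p A_{j i} · V_{i p} · R_{j p} / (2 · O_{j p}) and R^V_{i p} = Σ_j A_{j i} · V_{i p} · R_{j p} / (2 · O_{j p}). Then total conservation holds across the bilinear operation: Σ_{j,i} R^A_{j i} + Σ_{i,p} R^V_{i p} = Σ_{j,p} R_{j p}. -/

import Mathlib

/-- For the bilinear matrix product `O = A · V`, the AttnLRP relevances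
for `A` and `V` together conserve the total output relevance. -/
theorem attnlrp_bilinear_conservation (J I P : ℕ)
    (A : Fin J → Fin I → ℝ) (V : Fin I → Fin P → ℝ)
    (O : Fin J → Fin P → ℝ) (hO : ∀ j p, O j p = ∑ i, A j i * V i p)
    (hO0 : ∀ j p, O j p ≠ 0) (R : Fin J → Fin P → ℝ)
    (RA : Fin J → Fin I → ℝ)
    (hRA : ∀ j i, RA j i = ∑ p, A j i * V i p * R j p / (2 * O j p))
    (RV : Fin I → Fin P → ℝ)
    (hRV : ∀ i p, RV i p = ∑ j, A j i * V i p * R j p / (2 * O j p)) :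
    (∑ j, ∑ i, RA j i) + (∑ i, ∑ p, RV i p) = ∑ j, ∑ p, R j p := by
  have key : ∀ j p, (∑ i, A j i * V i p * R j p / (2 * O j p)) = R j p / 2 := by
    intro j p
    rw [← Finset.sum_div]
    rw [show (∑ i, A j i * V i p * R j p) = (∑ i, A j i * V i p) * R j p by
      rw [Finset.sum_mul]]
    rw [← hO j p]
    field_simp [hO0 j p]
  have h1 : (∑ j, ∑ i, RA j i) = ∑ j, ∑ p, R j p / 2 := by
    refine Finset.sum_congr rfl fun j _ => ?_
    simp only [hRA]
    rw [Finset.sum_comm]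
    exact Finset.sum_congr rfl fun p _ => key j p
  have h2 : (∑ i, ∑ p, RV i p) = ∑ j, ∑ p, R j p / 2 := by
    simp only [hRV]
    calc (∑ i, ∑ p, ∑ j, A j i * V i p * R j p / (2 * O j p))
        = ∑ i, ∑ j, ∑ p, A j i * V i p * R j p / (2 * O j p) :=
          Finset.sum_congr rfl fun i _ => Finset.sum_comm
      _ = ∑ j, ∑ i, ∑ p, A j i * V i p * R j p / (2 * O j p) :=
          Finset.sum_comm
      _ = ∑ j, ∑ p, R j p / 2 := by
          refine Finset.sum_congr rfl fun j _ => ?_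
          rw [Finset.sum_comm]
          exact Finset.sum_congr rfl fun p _ => key j p
  rw [h1, h2, ← Finset.sum_add_distrib]
  exact Finset.sum_congr rfl fun j _ => by
    rw [← Finset.sum_add_distrib]
    exact Finset.sum_congr rfl fun p _ => by ring
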